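/- Let f : (ℝ³)³ → ℝ⁵ be given by f(a₁,a₂,a₃) = (⟨a₁,a₂⟩, ⟨a₂,a₃⟩, ⟨a₃,a₁⟩, ‖a₁‖²−‖a₂‖², ‖a₂‖²−‖a₃‖²). Then for every a = (a₁,a₂,a₃) ∈ (ℝ³)³ and every i ∈ {0,1,2,3}, the derivative of f at a annihilates the vector Vᵢ(a); that is, Df_a(Vᵢ(a)) = 0 for V₀(a) = (a₂×a₃, a₃×a₁, a₁×a₂), V₁(a) = (0, a₂×a₁, a₃×a₁), V₂(a) = (a₁×a₂, 0, a₃×a₂), V₃(a) = (a₁×a₃, a₂×a₃, 0). -/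

import Mathlib

open scoped RealInnerProductSpace

noncomputable section

/-- `ℝ³` with the standard (Euclidean) inner product. -/
abbrev E3 : Type := EuclideanSpace ℝ (Fin 3)

/-- The cross product on `ℝ³`. -/
def cross (u v : E3) : E3 :=
  (WithLp.equiv 2 (Fin 3 → ℝ)).symm
    (crossProduct ((WithLp.equiv 2 (Fin 3 → ℝ)) u) ((WithLp.equiv 2 (Fin 3 → ℝ)) v))

/-- `Φ(a₁,a₂,a₃) = ⟨a₁, a₂ × a₃⟩`. -/
def Phi (a : E3 × E3 × E3) : ℝ := ⟪a.1, cross a.2.1 a.2.2⟫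

/-- The five Casimir functions collected into a map `(ℝ³)³ → ℝ⁵`. -/
def casimir (a : E3 × E3 × E3) : Fin 5 → ℝ :=
  ![⟪a.1, a.2.1⟫, ⟪a.2.1, a.2.2⟫, ⟪a.2.2, a.1⟫,
    ‖a.1‖ ^ 2 - ‖a.2.1‖ ^ 2, ‖a.2.1‖ ^ 2 - ‖a.2.2‖ ^ 2]

/-- The vector field `V₀(a) = (a₂×a₃, a₃×a₁, a₁×a₂)`. -/
def V0 (a : E3 × E3 × E3) : E3 × E3 × E3 :=
  (cross a.2.1 a.2.2, cross a.2.2 a.1, cross a.1 a.2.1)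

/-- The vector field `V₁(a) = (0, a₂×a₁, a₃×a₁)`. -/
def V1 (a : E3 × E3 × E3) : E3 × E3 × E3 :=
  (0, cross a.2.1 a.1, cross a.2.2 a.1)

/-- The vector field `V₂(a) = (a₁×a₂, 0, a₃×a₂)`. -/
def V2 (a : E3 × E3 × E3) : E3 × E3 × E3 :=
  (cross a.1 a.2.1, 0, cross a.2.2 a.2.1)

/-- The vector field `V₃(a) = (a₁×a₃, a₂×a₃, 0)`. -/
def V3 (a : E3 × E3 × E3) : E3 × E3 × E3 :=
  (cross a.1 a.2.2, cross a.2.1 a.2.2, 0)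



abbrev P1 : E3 × E3 × E3 →L[ℝ] E3 := ContinuousLinearMap.fst ℝ E3 (E3 × E3)
abbrev P2 : E3 × E3 × E3 →L[ℝ] E3 :=
  (ContinuousLinearMap.fst ℝ E3 E3).comp (ContinuousLinearMap.snd ℝ E3 (E3 × E3))
abbrev P3 : E3 × E3 × E3 →L[ℝ] E3 :=
  (ContinuousLinearMap.snd ℝ E3 E3).comp (ContinuousLinearMap.snd ℝ E3 (E3 × E3))

/-- Auxiliary: derivative of `p ↦ ⟪F p, G p⟫` for continuous linear `F, G`. -/
def Dab (a : E3 × E3 × E3) (F G : E3 × E3 × E3 →L[ℝ] E3) : E3 × E3 × E3 →L[ℝ] ℝ :=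
  (fderivInnerCLM ℝ (F a, G a)).comp (F.prod G)

theorem hasFDerivCasimir (a : E3 × E3 × E3) :
    HasFDerivAt casimir (ContinuousLinearMap.pi
      ![Dab a P1 P2, Dab a P2 P3, Dab a P3 P1,
        Dab a P1 P1 - Dab a P2 P2, Dab a P2 P2 - Dab a P3 P3]) a := by
  have h1 : HasFDerivAt (fun p : E3 × E3 × E3 => p.1) P1 a := hasFDerivAt_fst
  have h2 : HasFDerivAt (fun p : E3 × E3 × E3 => p.2.1) P2 a :=
    hasFDerivAt_fst.comp a hasFDerivAt_snd
  have h3 : HasFDerivAt (fun p : E3 × E3 × E3 => p.2.2) P3 a :=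
    hasFDerivAt_snd.comp a hasFDerivAt_snd
  rw [hasFDerivAt_pi']
  intro i
  fin_cases i <;>
    simp only [casimir, ContinuousLinearMap.proj_pi, Matrix.cons_val_zero, Matrix.cons_val_one,
      Matrix.head_cons, Matrix.cons_val_two, Matrix.tail_cons, Matrix.cons_val_three,
      Matrix.cons_val_four, Fin.isValue, ← real_inner_self_eq_norm_sq]
  · exact h1.inner ℝ h2
  · exact h2.inner ℝ h3
  · exact h3.inner ℝ h1
  · exact (h1.inner ℝ h1).sub (h2.inner ℝ h2)
  · exact (h2.inner ℝ h2).sub (h3.inner ℝ h3)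

set_option maxHeartbeats 2000000 in
/-- The derivative of the Casimir map annihilates each of the frame fields `V₀,…,V₃`. -/
theorem casimir_fderiv_annihilates_frame (a : E3 × E3 × E3) :
    fderiv ℝ casimir a (V0 a) = 0 ∧ fderiv ℝ casimir a (V1 a) = 0 ∧
    fderiv ℝ casimir a (V2 a) = 0 ∧ fderiv ℝ casimir a (V3 a) = 0 := by
  refine ⟨?_, ?_, ?_, ?_⟩ <;>
  · rw [(hasFDerivCasimir a).fderiv]
    funext i
    fin_cases i <;>
    · simp only [V0, V1, V2, V3, ContinuousLinearMap.pi_apply, Dab, Matrix.cons_val_zero,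
        Matrix.cons_val_one, Matrix.head_cons, Matrix.cons_val_two, Matrix.tail_cons,
        Matrix.cons_val_three, Matrix.cons_val_four, ContinuousLinearMap.comp_apply,
        ContinuousLinearMap.sub_apply, ContinuousLinearMap.prod_apply, fderivInnerCLM_apply,
        ContinuousLinearMap.coe_fst', ContinuousLinearMap.coe_snd', Fin.isValue, Pi.zero_apply]
      simp [cross, PiLp.inner_apply, RCLike.inner_apply, Fin.sum_univ_three, cross_apply,
        WithLp.equiv_symm_apply, PiLp.toLp_apply]
      ring


end
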